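/- Along a solution of the two-body problem r̈ = -μ* r/‖r‖³, the eccentricity vector e = (ṙ × h)/μ* - r/‖r‖ is constant in time, where h = r × ṙ. -/

import Mathlib

/-- Euclidean dot product on ℝ³. -/
def dot3 (a b : Fin 3 → ℝ) : ℝ := a 0 * b 0 + a 1 * b 1 + a 2 * b 2

/-- Cross product on ℝ³. -/
def cross3 (a b : Fin 3 → ℝ) : Fin 3 → ℝ :=
  ![a 1 * b 2 - a 2 * b 1, a 2 * b 0 - a 0 * b 2, a 0 * b 1 - a 1 * b 0]

/-- Euclidean norm on ℝ³. -/
noncomputable def norm3 (a : Fin 3 → ℝ) : ℝ := Real.sqrt (dot3 a a)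

lemma dot3_pos {a : Fin 3 → ℝ} (ha : a ≠ 0) : 0 < dot3 a a := by
  have h0 : 0 ≤ dot3 a a := by
    unfold dot3; nlinarith [sq_nonneg (a 0), sq_nonneg (a 1), sq_nonneg (a 2)]
  rcases h0.lt_or_eq with h | h
  · exact h
  · exfalso
    apply ha
    have e0 : a 0 = 0 := by unfold dot3 at h; nlinarith [sq_nonneg (a 1), sq_nonneg (a 2)]
    have e1 : a 1 = 0 := by unfold dot3 at h; nlinarith [sq_nonneg (a 0), sq_nonneg (a 2)]
    have e2 : a 2 = 0 := by unfold dot3 at h; nlinarith [sq_nonneg (a 0), sq_nonneg (a 1)]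
    funext i
    fin_cases i <;> simpa using ‹_›

lemma norm3_pos {a : Fin 3 → ℝ} (ha : a ≠ 0) : 0 < norm3 a :=
  Real.sqrt_pos.mpr (dot3_pos ha)

lemma sq_norm3 {a : Fin 3 → ℝ} (ha : a ≠ 0) : (norm3 a) ^ 2 = dot3 a a :=
  Real.sq_sqrt (dot3_pos ha).le

lemma hasDerivAt_cross3 {u v : ℝ → Fin 3 → ℝ} {u' v' : Fin 3 → ℝ} {t : ℝ}
    (hu : HasDerivAt u u' t) (hv : HasDerivAt v v' t) :
    HasDerivAt (fun t => cross3 (u t) (v t)) (cross3 u' (v t) + cross3 (u t) v') t := by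
  have hu' : ∀ j, HasDerivAt (fun t => u t j) (u' j) t := fun j => hasDerivAt_pi.mp hu j
  have hv' : ∀ j, HasDerivAt (fun t => v t j) (v' j) t := fun j => hasDerivAt_pi.mp hv j
  rw [hasDerivAt_pi]
  intro i
  fin_cases i <;> simp only [cross3, Pi.add_apply, Fin.reduceFinMk, Fin.zero_eta, Fin.mk_one,
    Matrix.cons_val_zero, Matrix.cons_val_one, Matrix.head_cons, Matrix.cons_val_two,
    Matrix.tail_cons, Fin.isValue] <;>
  · convert (((hu' _).fun_mul (hv' _)).fun_sub ((hu' _).fun_mul (hv' _))) using 1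
    ring

lemma hasDerivAt_dot3 {u v : ℝ → Fin 3 → ℝ} {u' v' : Fin 3 → ℝ} {t : ℝ}
    (hu : HasDerivAt u u' t) (hv : HasDerivAt v v' t) :
    HasDerivAt (fun t => dot3 (u t) (v t)) (dot3 u' (v t) + dot3 (u t) v') t := by
  have hu' : ∀ j, HasDerivAt (fun t => u t j) (u' j) t := fun j => hasDerivAt_pi.mp hu j
  have hv' : ∀ j, HasDerivAt (fun t => v t j) (v' j) t := fun j => hasDerivAt_pi.mp hv j
  unfold dot3
  refine ((((hu' 0).fun_mul (hv' 0)).fun_add ((hu' 1).fun_mul (hv' 1))).fun_add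
    (((hu' 2).fun_mul (hv' 2)))).congr_deriv (Eq.symm ?_)
  ring

/-- Along a solution of the two-body problem `r̈ = -μ* r/‖r‖³`, the eccentricity
vector `e = (ṙ × h)/μ* - r/‖r‖` (with `h = r × ṙ`) is constant in time. -/
theorem eccentricity_vector_conserved
    (μs : ℝ) (hμs : 0 < μs)
    (r : ℝ → Fin 3 → ℝ) (hr : ContDiff ℝ 2 r)
    (hne : ∀ t, r t ≠ 0)
    (heq : ∀ t, deriv (deriv r) t = (-(μs / (norm3 (r t))^3)) • r t) :
    ∀ s t : ℝ,
      (μs⁻¹ • cross3 (deriv r s) (cross3 (r s) (deriv r s)))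
          - (norm3 (r s))⁻¹ • r s
        = (μs⁻¹ • cross3 (deriv r t) (cross3 (r t) (deriv r t)))
          - (norm3 (r t))⁻¹ • r t := by
  have hrd : Differentiable ℝ r := hr.differentiable (by norm_num)
  have hvd : Differentiable ℝ (deriv r) := by
    have h2 : ContDiff ℝ ((1 : ℕ) + 1) r := by exact_mod_cast hr
    exact ((contDiff_succ_iff_deriv.mp h2).2.2).differentiable (by norm_num)
  set F : ℝ → Fin 3 → ℝ := fun t =>
    (μs⁻¹ • cross3 (deriv r t) (cross3 (r t) (deriv r t))) - (norm3 (r t))⁻¹ • r t with hF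
  have key : ∀ u, HasDerivAt F 0 u := by
    intro u
    have hn : 0 < norm3 (r u) := norm3_pos (hne u)
    have hn2 : (norm3 (r u)) ^ 2 = dot3 (r u) (r u) := sq_norm3 (hne u)
    have hR : HasDerivAt r (deriv r u) u := (hrd u).hasDerivAt
    have hV : HasDerivAt (deriv r) ((-(μs / (norm3 (r u))^3)) • r u) u := by
      have := (hvd u).hasDerivAt
      rwa [heq u] at this
    have h1 := hasDerivAt_cross3 hR hV
    have h2 := hasDerivAt_cross3 hV h1
    have h3 := h2.fun_const_smul μs⁻¹
    have hq := hasDerivAt_dot3 hR hR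
    have hnder : HasDerivAt (fun t => norm3 (r t))
        ((dot3 (deriv r u) (r u) + dot3 (r u) (deriv r u)) / (2 * norm3 (r u))) u := by
      simpa [norm3] using hq.sqrt (dot3_pos (hne u)).ne'
    have hinv := hnder.fun_inv hn.ne'
    have h4 := hinv.fun_smul hR
    have := h3.fun_sub h4
    refine this.congr_deriv (Eq.symm ?_)
    have hμ : μs ≠ 0 := hμs.ne'
    have hn0 : norm3 (r u) ≠ 0 := hn.ne'
    funext i
    fin_cases i <;>
      simp only [cross3, dot3, Pi.add_apply, Pi.sub_apply, Pi.smul_apply, smul_eq_mul,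
        Pi.zero_apply, Matrix.cons_val_zero, Matrix.cons_val_one, Matrix.head_cons,
        Matrix.cons_val_two, Matrix.tail_cons, Fin.isValue, neg_mul, Fin.reduceFinMk,
        Fin.zero_eta, Fin.mk_one] <;>
      field_simp <;>
      unfold dot3 at hn2
    · linear_combination (2 * μs * deriv r u 0) * hn2
    · linear_combination (2 * μs * deriv r u 1) * hn2
    · linear_combination (2 * μs * deriv r u 2) * hn2
  intro s t
  exact is_const_of_deriv_eq_zero (fun u => (key u).differentiableAt) (fun u => (key u).deriv) s t
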